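/- arXiv:1602.01590 — 3 statements merged into one kernel-verified Lean document; each statement's English description precedes it below -/
import Mathlib

section
/- Let U be a finite-dimensional vector space over a field F of characteristic ≠ 2, b a nondegenerate symmetric bilinear form on U, and u a nonzero element of U. Define E(U,b,u) = F × U × F with multiplication (α,x,β)(γ,y,δ) = (0, αγ·u, b(x,y)). Then E(U,b,u) is a nilpotent evolution algebra with Ann(E) = 0×0×F, Ann²(E) = 0×U×F, and Ann³(E) = E. -/
/-- The multiplication of a (not necessarily associative) `F`-algebra structure on `A`,
given as a bilinear map. -/
abbrev Mul2 (F A : Type*) [Field F] [AddCommGroup A] [Module F A] :=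
  A →ₗ[F] A →ₗ[F] A

variable {F A : Type*} [Field F] [AddCommGroup A] [Module F A]

/-- A submodule is an ideal if it absorbs multiplication on both sides. -/
def IsIdeal (m : Mul2 F A) (I : Submodule F A) : Prop :=
  ∀ x ∈ I, ∀ y : A, m x y ∈ I ∧ m y x ∈ I

/-- An algebra is decomposable if it is the direct sum of two nonzero ideals. -/
def Decomposable (m : Mul2 F A) : Prop :=
  ∃ I J : Submodule F A, IsIdeal m I ∧ IsIdeal m J ∧ I ≠ ⊥ ∧ J ≠ ⊥ ∧
    I ⊓ J = ⊥ ∧ I ⊔ J = ⊤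

/-- The set of `x` with `x A ⊆ N` and `A x ⊆ N`, as a submodule. -/
def annOver (m : Mul2 F A) (N : Submodule F A) : Submodule F A where
  carrier := {x | ∀ y : A, m x y ∈ N ∧ m y x ∈ N}
  add_mem' := by
    intro a b ha hb y
    constructor
    · simpa using N.add_mem (ha y).1 (hb y).1
    · simpa using N.add_mem (ha y).2 (hb y).2
  zero_mem' := by intro y; simp
  smul_mem' := by
    intro c a ha y
    constructor
    · simpa using N.smul_mem c (ha y).1
    · simpa using N.smul_mem c (ha y).2

/-- The annihilator `{x | xA = Ax = 0}`. -/
def annA (m : Mul2 F A) : Submodule F A := annOver m ⊥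

/-- The upper annihilating series: `Ann⁰ = 0`, `Annⁱ/Annⁱ⁻¹ = Ann(A/Annⁱ⁻¹)`. -/
def annSeries (m : Mul2 F A) : ℕ → Submodule F A
  | 0 => ⊥
  | (k+1) => annOver m (annSeries m k)

/-- The span of all products of elements of `I` with elements of `J`. -/
def mulSub (m : Mul2 F A) (I J : Submodule F A) : Submodule F A :=
  Submodule.span F {z | ∃ x ∈ I, ∃ y ∈ J, z = m x y}

/-- `A²`, the span of all products. -/
def sqA (m : Mul2 F A) : Submodule F A := mulSub m ⊤ ⊤

/-- Right powers: `rpow 0 = A = A^{<1>}`, `rpow (k+1) = (rpow k) · A`. -/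
def rpow (m : Mul2 F A) : ℕ → Submodule F A
  | 0 => ⊤
  | (k+1) => mulSub m (rpow m k) ⊤

/-- Full powers: `apow 0 = A = A¹`, `apow (k+1) = Σ_{i+j=k} (apow i)(apow j)`,
i.e. `A^{k+2} = Σ_{i=1}^{k+1} Aⁱ A^{k+2-i}`. -/
def apow (m : Mul2 F A) : ℕ → Submodule F A
  | 0 => ⊤
  | (k+1) => ⨆ i : Fin (k+1), mulSub m (apow m i.1) (apow m (k - i.1))
  decreasing_by
  · exact i.2
  · exact Nat.lt_succ_of_le (Nat.sub_le _ _)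

/-- `A` is nilpotent: `Aⁿ = 0` for some `n`. -/
def IsNilpotentAlg (m : Mul2 F A) : Prop := ∃ n, apow m n = ⊥

/-- `A` is right nilpotent: `A^{<n>} = 0` for some `n`. -/
def IsRightNilpotentAlg (m : Mul2 F A) : Prop := ∃ n, rpow m n = ⊥

/-- A basis is natural if products of distinct basis vectors vanish. -/
def NaturalBasis (m : Mul2 F A) {ι : Type*} (bs : Module.Basis ι F A) : Prop :=
  ∀ i j, i ≠ j → m (bs i) (bs j) = 0

/-- An evolution algebra: commutative with some finite natural basis. -/
def IsEvolutionAlg (m : Mul2 F A) : Prop :=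
  (∀ x y, m x y = m y x) ∧
  ∃ (ι : Type) (_ : Fintype ι) (bs : Module.Basis ι F A), NaturalBasis m bs

/-- The set of `x` with `x N = 0`, as a submodule. -/
def annIn (m : Mul2 F A) (N : Submodule F A) : Submodule F A where
  carrier := {x | ∀ y ∈ N, m x y = 0}
  add_mem' := by
    intro a b ha hb y hy
    simp [ha y hy, hb y hy]
  zero_mem' := by intro y hy; simp
  smul_mem' := by
    intro c a ha y hy
    simp [ha y hy]


variable {F U : Type*} [Field F] [AddCommGroup U] [Module F U]

/-- Multiplication of `E(U,b) = U × F`: `(u,α)(v,β) = (0, b(u,v))`. -/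
noncomputable def mulP (b : U →ₗ[F] U →ₗ[F] F) :
    (U × F) →ₗ[F] (U × F) →ₗ[F] (U × F) :=
  LinearMap.mk₂ F (fun p q => (0, b p.1 q.1))
    (fun p p' q => by simp [Prod.ext_iff])
    (fun c p q => by simp [Prod.ext_iff])
    (fun p q q' => by simp [Prod.ext_iff])
    (fun c p q => by simp [Prod.ext_iff])

/-- Multiplication of `E(U,b,g) = U × F × F`. -/
noncomputable def mulT (b : U →ₗ[F] U →ₗ[F] F) (g : U →ₗ[F] U) :
    (U × F × F) →ₗ[F] (U × F × F) →ₗ[F] (U × F × F) :=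
  LinearMap.mk₂ F (fun p q => (0, b p.1 q.1, b (g p.1) q.1 + p.2.1 * q.2.1))
    (fun p p' q => by simp [Prod.ext_iff, add_mul]; ring)
    (fun c p q => by simp [Prod.ext_iff, smul_eq_mul]; ring)
    (fun p q q' => by simp [Prod.ext_iff, mul_add]; ring)
    (fun c p q => by simp [Prod.ext_iff, smul_eq_mul]; ring)

/-- Multiplication of `E(U,b,u) = F × U × F`: `(α,x,β)(γ,y,δ) = (0, αγ·u, b(x,y))`. -/
noncomputable def mulG (b : U →ₗ[F] U →ₗ[F] F) (u : U) :
    (F × U × F) →ₗ[F] (F × U × F) →ₗ[F] (F × U × F) :=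
  LinearMap.mk₂ F (fun p q => (0, (p.1 * q.1) • u, b p.2.1 q.2.1))
    (fun p p' q => by simp [Prod.ext_iff, add_mul, add_smul])
    (fun c p q => by simp [Prod.ext_iff, smul_eq_mul, mul_assoc, smul_smul])
    (fun p q q' => by simp [Prod.ext_iff, mul_add, add_smul])
    (fun c p q => by simp [Prod.ext_iff, smul_eq_mul, smul_smul, mul_left_comm])

/-- Multiplication of `E(U,b,f,g) = U × F × F × F`. -/
noncomputable def mulQ (b : U →ₗ[F] U →ₗ[F] F) (f g : U →ₗ[F] U) :
    (U × F × F × F) →ₗ[F] (U × F × F × F) →ₗ[F] (U × F × F × F) :=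
  LinearMap.mk₂ F (fun p q =>
      (0, b p.1 q.1, b (f p.1) q.1 + p.2.1 * q.2.1, b (g p.1) q.1 + p.2.2.1 * q.2.2.1))
    (fun p p' q => by simp [Prod.ext_iff, add_mul]; constructor <;> ring)
    (fun c p q => by simp [Prod.ext_iff, smul_eq_mul]; constructor <;> ring)
    (fun p q q' => by simp [Prod.ext_iff, mul_add]; constructor <;> ring)
    (fun c p q => by simp [Prod.ext_iff, smul_eq_mul]; constructor <;> ring)


/-!
Every product in `E = F × U × F` has the form `(0, αγ·u, b(x,y))`. Testing against `(1,0,0)`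
and `(0,y,0)`, and using `u ≠ 0` and the nondegeneracy of `b`, gives `Ann¹ = 0×0×F` and
`Ann² = 0×U×F`; since all products lie in `0×U×F`, `Ann³ = E`. In any algebra `Annᵏ = A`
forces `A^(2ᵏ) = 0`. A `b`-orthogonal basis of `U` (which exists as `char F ≠ 2`) together with
the two coordinate vectors is a natural basis.
-/

section AnnihilatingSeries

variable {F A : Type*} [Field F] [AddCommGroup A] [Module F A] {m : Mul2 F A}

@[simp]
theorem annSeries_zero (m : Mul2 F A) : annSeries m 0 = ⊥ := rfl

theorem mulSub_le {I J N : Submodule F A} (h : ∀ x ∈ I, ∀ y ∈ J, m x y ∈ N) :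
    mulSub m I J ≤ N := by
  rw [mulSub, Submodule.span_le]
  rintro _ ⟨x, hx, y, hy, rfl⟩
  exact h x hx y hy

-- `apow m n` is `Aⁿ⁺¹`. A product of degree `≥ 2ʲ⁺¹` has a factor of degree `≥ 2ʲ`,
-- and a product with a factor in `Annⁱ⁺¹` lies in `Annⁱ`.
theorem apow_le_annSeries {k : ℕ} (hk : annSeries m k = ⊤) {j : ℕ} (hj : j ≤ k) :
    ∀ n, 2 ^ j ≤ n + 1 → apow m n ≤ annSeries m (k - j) := by
  induction j with
  | zero => simp [hk]
  | succ j ih =>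
    have ih' : ∀ n, 2 ^ j ≤ n + 1 → apow m n ≤ annSeries m (k - (j + 1) + 1) := by
      rw [show k - (j + 1) + 1 = k - j by omega]
      exact ih (by omega)
    rintro (_ | n) hn <;> rw [pow_succ] at hn
    · have := Nat.one_le_two_pow (n := j)
      omega
    rw [apow]
    refine iSup_le fun ⟨i, hi⟩ => mulSub_le fun x hx y hy => ?_
    by_cases hij : 2 ^ j ≤ i + 1
    · exact (ih' i hij hx y).1
    · exact (ih' (n - i) (by omega) hy x).2

theorem isNilpotentAlg_of_annSeries_eq_top {k : ℕ} (hk : annSeries m k = ⊤) :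
    IsNilpotentAlg m := by
  refine ⟨2 ^ k - 1, le_bot_iff.1 ?_⟩
  simpa using apow_le_annSeries hk le_rfl (2 ^ k - 1) (by omega)

end AnnihilatingSeries

section MulG

variable {F U : Type*} [Field F] [AddCommGroup U] [Module F U]
  {b : U →ₗ[F] U →ₗ[F] F} {u : U}

theorem mulG_apply (p q : F × U × F) :
    mulG b u p q = (0, (p.1 * q.1) • u, b p.2.1 q.2.1) := rfl

theorem mulG_comm (hsymm : ∀ x y, b x y = b y x) (p q : F × U × F) :
    mulG b u p q = mulG b u q p := by
  rw [mulG_apply, mulG_apply, mul_comm, hsymm]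

theorem naturalBasis_mulG {ι : Type*} {v : Module.Basis ι F U} (hv : b.IsOrthoᵢ v) :
    NaturalBasis (mulG b u)
      ((Module.Basis.singleton Unit F).prod (v.prod (Module.Basis.singleton Unit F))) := by
  rintro (_ | k | _) (_ | l | _) hij <;>
    simp_all [mulG_apply, Module.Basis.prod_apply]
  exact hv hij

theorem isEvolutionAlg_mulG [FiniteDimensional F U] (hchar : (2 : F) ≠ 0)
    (hsymm : ∀ x y, b x y = b y x) : IsEvolutionAlg (mulG b u) := by
  have : Invertible (2 : F) := invertibleOfNonzero hchar
  obtain ⟨v, hv⟩ := LinearMap.BilinForm.exists_orthogonal_basis (B := b) ⟨hsymm⟩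
  exact ⟨mulG_comm hsymm, _, inferInstance, _, naturalBasis_mulG (u := u) hv⟩

theorem mem_annSeries_one_mulG (hnd : ∀ x, (∀ y, b x y = 0) → x = 0) (hu : u ≠ 0)
    {p : F × U × F} :
    p ∈ annSeries (mulG b u) 1 ↔ p.1 = 0 ∧ p.2.1 = 0 := by
  refine ⟨fun h => ⟨?_, hnd _ fun y => ?_⟩, fun ⟨h1, h2⟩ y => ?_⟩
  · simpa [mulG_apply, hu] using (h (1, 0, 0)).1
  · simpa [mulG_apply, Prod.ext_iff] using (h (0, y, 0)).1
  · simp [mulG_apply, h1, h2]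

theorem mem_annSeries_two_mulG (hnd : ∀ x, (∀ y, b x y = 0) → x = 0) (hu : u ≠ 0)
    {p : F × U × F} :
    p ∈ annSeries (mulG b u) 2 ↔ p.1 = 0 := by
  refine ⟨fun h => ?_, fun h1 y => ?_⟩
  · simpa [mulG_apply, mem_annSeries_one_mulG hnd hu, hu] using (h (1, 0, 0)).1
  · simp [mulG_apply, mem_annSeries_one_mulG hnd hu, h1]

theorem annSeries_three_mulG (hnd : ∀ x, (∀ y, b x y = 0) → x = 0) (hu : u ≠ 0) :
    annSeries (mulG b u) 3 = ⊤ :=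
  eq_top_iff.2 fun _ _ y => by simp [mulG_apply, mem_annSeries_two_mulG hnd hu]

end MulG

theorem stmt10_general {F U : Type*} [Field F] (hchar : (2 : F) ≠ 0)
    [AddCommGroup U] [Module F U] [FiniteDimensional F U]
    (b : U →ₗ[F] U →ₗ[F] F)
    (hsymm : ∀ x y, b x y = b y x)
    (hnd : ∀ x, (∀ y, b x y = 0) → x = 0)
    (u : U) (hu : u ≠ 0) :
    IsEvolutionAlg (mulG b u) ∧ IsNilpotentAlg (mulG b u) ∧
      annSeries (mulG b u) 1 =
        Submodule.prod (⊥ : Submodule F F)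
          (Submodule.prod (⊥ : Submodule F U) (⊤ : Submodule F F)) ∧
      annSeries (mulG b u) 2 =
        Submodule.prod (⊥ : Submodule F F)
          (Submodule.prod (⊤ : Submodule F U) (⊤ : Submodule F F)) ∧
      annSeries (mulG b u) 3 = ⊤ := by
  have hAnn3 := annSeries_three_mulG hnd hu
  refine ⟨isEvolutionAlg_mulG hchar hsymm, isNilpotentAlg_of_annSeries_eq_top hAnn3, ?_, ?_,
    hAnn3⟩
  · ext p
    simp [mem_annSeries_one_mulG hnd hu, Submodule.mem_prod]
  · ext p
    simp [mem_annSeries_two_mulG hnd hu, Submodule.mem_prod]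

/-- `E(U,b,u)` is a nilpotent evolution algebra with
`Ann(E) = 0×0×F`, `Ann²(E) = 0×U×F` and `Ann³(E) = E`. -/
theorem stmt10 {F U : Type*} [Field F] (hchar : (2 : F) ≠ 0)
    [AddCommGroup U] [Module F U] [FiniteDimensional F U]
    (hU : 1 ≤ Module.finrank F U)
    (b : U →ₗ[F] U →ₗ[F] F)
    (hsymm : ∀ x y, b x y = b y x)
    (hnd : ∀ x, (∀ y, b x y = 0) → x = 0)
    (u : U) (hu : u ≠ 0) :
    IsEvolutionAlg (mulG b u) ∧ IsNilpotentAlg (mulG b u) ∧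
      annSeries (mulG b u) 1 =
        Submodule.prod (⊥ : Submodule F F)
          (Submodule.prod (⊥ : Submodule F U) (⊤ : Submodule F F)) ∧
      annSeries (mulG b u) 2 =
        Submodule.prod (⊥ : Submodule F F)
          (Submodule.prod (⊤ : Submodule F U) (⊤ : Submodule F F)) ∧
      annSeries (mulG b u) 3 = ⊤ :=
  stmt10_general hchar b hsymm hnd u hu
end

section
/- Let E be a finite-dimensional nilpotent evolution algebra with natural basis B partitioned as B = B₁ ∪ … ∪ B_r where Bᵢ = {e ∈ B : e² ∈ Ann^{i-1}(E), e ∉ Ann^{i-1}(E)}, and set Uᵢ = span(Bᵢ). Then for each i ≥ 2, Uᵢ ⊕ U₁ = {x ∈ Annⁱ(E) : x·Ann^{i-1}(E) = 0}; in particular this subspace does not depend on the chosen natural basis. -/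
variable {F A : Type*} [Field F] [AddCommGroup A] [Module F A]

/-!
In a natural basis `(eᵢ)` one has `x eⱼ = xⱼ eⱼ²`. Hence, in a commutative algebra, `x` multiplies
`E` into a subspace `N` iff every `eⱼ` in the support of `x` satisfies `eⱼ² ∈ N`, and `x` kills the
span of `{eⱼ | j ∈ S}` iff every `eⱼ` in its support with `j ∈ S` satisfies `eⱼ² = 0`. So
`Annⁱ(E)`, `Annⁱ(E) ∩ annIn (Annⁱ⁻¹(E))` and `Uᵢ ⊕ U₁` are all spanned by basis vectors, and the
identity reduces to one between sets of indices.
-/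

section

variable {ι : Type*} {m : Mul2 F A} {bs : Module.Basis ι F A}

theorem Module.Basis.span_image_inf_span_image (b : Module.Basis ι F A) (S T : Set ι) :
    Submodule.span F (b '' S) ⊓ Submodule.span F (b '' T) = Submodule.span F (b '' (S ∩ T)) := by
  ext x
  simp only [Submodule.mem_inf, Module.Basis.mem_span_image, Set.subset_inter_iff]

namespace NaturalBasis

theorem mul_basis (hnat : NaturalBasis m bs) (x : A) (j : ι) :
    m x (bs j) = bs.repr x j • m (bs j) (bs j) := by
  have : m.flip (bs j) = (bs.coord j).smulRight (m (bs j) (bs j)) := by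
    refine bs.ext fun i => ?_
    rcases eq_or_ne i j with rfl | hij
    · simp
    · simp [hnat i j hij, hij]
  exact LinearMap.congr_fun this x

theorem annOver_eq_span (hnat : NaturalBasis m bs) (hcomm : ∀ x y, m x y = m y x)
    (N : Submodule F A) :
    annOver m N = Submodule.span F (bs '' {i | m (bs i) (bs i) ∈ N}) := by
  apply le_antisymm
  · intro x hx
    rw [Module.Basis.mem_span_image]
    intro j hj
    have hxj : bs.repr x j • m (bs j) (bs j) ∈ N := hnat.mul_basis x j ▸ (hx (bs j)).1
    simpa [smul_smul, inv_mul_cancel₀ (Finsupp.mem_support_iff.mp hj)] using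
      N.smul_mem (bs.repr x j)⁻¹ hxj
  · rw [Submodule.span_le]
    rintro _ ⟨i, hi, rfl⟩ y
    have hiy : m (bs i) y ∈ N := by
      rw [hcomm, hnat.mul_basis]
      exact N.smul_mem _ hi
    exact ⟨hiy, hcomm y (bs i) ▸ hiy⟩

theorem basis_mem_annOver_iff (hnat : NaturalBasis m bs) (hcomm : ∀ x y, m x y = m y x)
    (N : Submodule F A) (i : ι) : bs i ∈ annOver m N ↔ m (bs i) (bs i) ∈ N := by
  rw [hnat.annOver_eq_span hcomm]
  exact bs.self_mem_span_image

theorem annIn_span_image (hnat : NaturalBasis m bs) (S : Set ι) :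
    annIn m (Submodule.span F (bs '' S)) =
      Submodule.span F (bs '' {j | j ∈ S → m (bs j) (bs j) = 0}) := by
  ext x
  have hkill : x ∈ annIn m (Submodule.span F (bs '' S)) ↔ ∀ j ∈ S, m x (bs j) = 0 := by
    refine ⟨fun hx j hj => hx _ (Submodule.subset_span ⟨j, hj, rfl⟩), fun hx y hy => ?_⟩
    have : Submodule.span F (bs '' S) ≤ LinearMap.ker (m x) := by
      rw [Submodule.span_le]
      rintro _ ⟨j, hj, rfl⟩
      exact hx j hj
    exact this hy
  simp only [hkill, hnat.mul_basis x, smul_eq_zero, Module.Basis.mem_span_image, Set.subset_def,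
    Finset.mem_coe, Finsupp.mem_support_iff, Set.mem_ofPred_eq]
  exact ⟨fun hx j hj hjS => (hx j hjS).resolve_left hj,
    fun hx j hjS => or_iff_not_imp_left.mpr fun hj => hx j hj hjS⟩

theorem span_sup_span_eq_annOver_inf_annIn (hnat : NaturalBasis m bs)
    (hcomm : ∀ x y, m x y = m y x) (N : Submodule F A) :
    Submodule.span F (bs '' {i | m (bs i) (bs i) ∈ annOver m N ∧ bs i ∉ annOver m N}) ⊔
      Submodule.span F (bs '' {i | m (bs i) (bs i) ∈ (⊥ : Submodule F A) ∧
        bs i ∉ (⊥ : Submodule F A)}) =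
    annOver m (annOver m N) ⊓ annIn m (annOver m N) := by
  have hindex : {i | m (bs i) (bs i) ∈ annOver m N ∧ bs i ∉ annOver m N} ∪
        {i | m (bs i) (bs i) ∈ (⊥ : Submodule F A) ∧ bs i ∉ (⊥ : Submodule F A)} =
      {i | m (bs i) (bs i) ∈ annOver m N} ∩ {j | j ∈ {i | m (bs i) (bs i) ∈ N} →
        m (bs j) (bs j) = 0} := by
    ext i
    simp only [Set.mem_union, Set.mem_inter_iff, Set.mem_ofPred_eq, Submodule.mem_bot,
      hnat.basis_mem_annOver_iff hcomm, bs.ne_zero i, not_false_eq_true, and_true]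
    constructor
    · rintro (⟨hM, hN⟩ | hzero)
      · exact ⟨hM, fun h => absurd h hN⟩
      · exact ⟨hzero ▸ (annOver m N).zero_mem, fun _ => hzero⟩
    · rintro ⟨hM, hzero⟩
      by_cases hN : m (bs i) (bs i) ∈ N
      · exact Or.inr (hzero hN)
      · exact Or.inl ⟨hM, hN⟩
  calc _ = Submodule.span F (bs '' ({i | m (bs i) (bs i) ∈ annOver m N} ∩
          {j | j ∈ {i | m (bs i) (bs i) ∈ N} → m (bs j) (bs j) = 0})) := by
        rw [← Submodule.span_union, ← Set.image_union, hindex]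
    _ = Submodule.span F (bs '' {i | m (bs i) (bs i) ∈ annOver m N}) ⊓
          Submodule.span F (bs '' {j | j ∈ {i | m (bs i) (bs i) ∈ N} → m (bs j) (bs j) = 0}) :=
        (bs.span_image_inf_span_image _ _).symm
    _ = _ := by
        rw [hnat.annOver_eq_span hcomm (annOver m N), hnat.annOver_eq_span hcomm N,
          hnat.annIn_span_image]

end NaturalBasis

end

theorem stmt14_general {F E : Type*} [Field F] [AddCommGroup E] [Module F E]
    (m : Mul2 F E) (hcomm : ∀ x y, m x y = m y x)
    {ι : Type*} (bs : Module.Basis ι F E) (hnat : NaturalBasis m bs)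
    (k : ℕ) (hk : 2 ≤ k) :
    Submodule.span F (⇑bs '' {i | m (bs i) (bs i) ∈ annSeries m (k - 1) ∧
        bs i ∉ annSeries m (k - 1)}) ⊔
      Submodule.span F (⇑bs '' {i | m (bs i) (bs i) ∈ annSeries m 0 ∧
        bs i ∉ annSeries m 0}) =
    annSeries m k ⊓ annIn m (annSeries m (k - 1)) := by
  obtain ⟨n, rfl⟩ : ∃ n, k = n + 2 := ⟨k - 2, by omega⟩
  exact hnat.span_sup_span_eq_annOver_inf_annIn hcomm (annSeries m n)

/-- For `i ≥ 2`, `Uᵢ ⊕ U₁ = {x ∈ Annⁱ(E) : x·Annⁱ⁻¹(E) = 0}`, where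
`Uⱼ` is spanned by the natural basis vectors `e` with `e² ∈ Annʲ⁻¹(E)`, `e ∉ Annʲ⁻¹(E)`. -/
theorem stmt14 {F E : Type*} [Field F] [AddCommGroup E] [Module F E]
    [FiniteDimensional F E] (m : Mul2 F E) (hcomm : ∀ x y, m x y = m y x)
    (hnil : IsNilpotentAlg m)
    {ι : Type*} [Fintype ι] (bs : Module.Basis ι F E) (hnat : NaturalBasis m bs)
    (k : ℕ) (hk : 2 ≤ k) :
    Submodule.span F (⇑bs '' {i | m (bs i) (bs i) ∈ annSeries m (k - 1) ∧
        bs i ∉ annSeries m (k - 1)}) ⊔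
      Submodule.span F (⇑bs '' {i | m (bs i) (bs i) ∈ annSeries m 0 ∧
        bs i ∉ annSeries m 0}) =
    annSeries m k ⊓ annIn m (annSeries m (k - 1)) :=
  stmt14_general m hcomm bs hnat k hk
end

section
/- Any nilpotent evolution algebra of dimension n and type [n₁,…,n_r] with r ≥ 3 and 2n₁ > n - r + 2, over a field, is decomposable. -/
variable {F A : Type*} [Field F] [AddCommGroup A] [Module F A]

/-!
If the annihilator `Ann(E)` is not contained in `E²`, pick `u ∈ Ann(E) \ E²`: the line `F u` and
any complement of it containing `E²` are two ideals, so `E` is decomposable.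
Otherwise the squares `eⱼ²` of a natural basis give, for each of the `r - 2` layers
`Annᵏ⁺¹(E) / Annᵏ(E)` with `1 ≤ k ≤ r - 2`, an element of `E²` in it, so
`n₁ + (r - 2) ≤ dim E²`; on the other hand `E²` is the image of `eⱼ ↦ eⱼ²`, whose kernel contains
`Ann(E)`, so `dim E² ≤ n - n₁`. Together these contradict `2 n₁ > n - r + 2`.
-/

open Submodule Module

section Annihilators

variable {F A : Type*} [Field F] [AddCommGroup A] [Module F A] (m : Mul2 F A)

lemma annSeries_one : annSeries m 1 = annA m := rfl

lemma mul_mem_sqA (x y : A) : m x y ∈ sqA m :=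
  subset_span ⟨x, mem_top, y, mem_top, rfl⟩

lemma isIdeal_of_sqA_le {I : Submodule F A} (h : sqA m ≤ I) : IsIdeal m I :=
  fun x _ y => ⟨h (mul_mem_sqA m x y), h (mul_mem_sqA m y x)⟩

lemma isIdeal_of_le_annA {I : Submodule F A} (h : I ≤ annA m) : IsIdeal m I := by
  intro x hx y
  obtain ⟨hxy, hyx⟩ := h hx y
  rw [mem_bot] at hxy hyx
  simp [hxy, hyx]

theorem decomposable_of_not_annA_le_sqA (hAnn : ¬ annA m ≤ sqA m) (hsq : sqA m ≠ ⊥) :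
    Decomposable m := by
  obtain ⟨u, huAnn, husq⟩ := SetLike.not_le_iff_exists.mp hAnn
  obtain ⟨J, hsqJ, hJ⟩ := (disjoint_span_singleton_of_notMem (K := F) husq).exists_isCompl
  refine ⟨F ∙ u, J, isIdeal_of_le_annA m ?_, isIdeal_of_sqA_le m hsqJ, ?_, ?_,
    hJ.symm.inf_eq_bot, hJ.symm.sup_eq_top⟩
  · exact (span_singleton_le_iff_mem u _).mpr huAnn
  · rw [Ne, span_singleton_eq_bot]
    rintro rfl
    exact husq (zero_mem _)
  · exact fun hJbot => hsq (le_bot_iff.mp (hJbot ▸ hsqJ))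

lemma annOver_mono {N N' : Submodule F A} (h : N ≤ N') : annOver m N ≤ annOver m N' :=
  fun _ hx y => ⟨h (hx y).1, h (hx y).2⟩

lemma annSeries_add_eq_of_succ_eq {k : ℕ} (h : annSeries m (k + 1) = annSeries m k) (l : ℕ) :
    annSeries m (k + l) = annSeries m k := by
  induction l with
  | zero => rfl
  | succ l ih =>
    show annOver m (annSeries m (k + l)) = annSeries m k
    rw [ih]
    exact h

lemma annSeries_le_succ : ∀ k, annSeries m k ≤ annSeries m (k + 1)
  | 0 => bot_le
  | k + 1 => annOver_mono m (annSeries_le_succ k)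

lemma annSeries_lt_succ {r : ℕ} (htop : annSeries m r = ⊤) (hmin : annSeries m (r - 1) ≠ ⊤)
    {k : ℕ} (hk : k < r) : annSeries m k < annSeries m (k + 1) := by
  refine lt_of_le_of_ne (annSeries_le_succ m k) fun heq => hmin ?_
  obtain ⟨l, rfl⟩ := Nat.exists_eq_add_of_lt hk
  have hstab := annSeries_add_eq_of_succ_eq m heq.symm
  rw [show k + l + 1 - 1 = k + l by omega, hstab, ← hstab (l + 1), ← add_assoc, htop]

end Annihilators

theorem finrank_add_le_finrank_of_lt_succ {K V : Type*} [DivisionRing K] [AddCommGroup V]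
    [Module K V] [FiniteDimensional K V] (f : ℕ → Submodule K V) {n : ℕ}
    (h : ∀ k < n, f k < f (k + 1)) : finrank K (f 0) + n ≤ finrank K (f n) := by
  induction n with
  | zero => rfl
  | succ n ih =>
    have hlt := finrank_lt_finrank_of_lt (h n n.lt_succ_self)
    have hle := ih fun k hk => h k (Nat.lt_succ_of_lt hk)
    omega

section Evolution

variable {F A : Type*} [Field F] [AddCommGroup A] [Module F A] {m : Mul2 F A}
  {ι : Type*} [Fintype ι] {bs : Basis ι F A}

lemma mul_basis_right (hnat : NaturalBasis m bs) (x : A) (j : ι) :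
    m x (bs j) = bs.repr x j • m (bs j) (bs j) := by
  conv_lhs => rw [← bs.sum_repr x]
  simp only [map_sum, map_smul, LinearMap.sum_apply, LinearMap.smul_apply]
  refine Finset.sum_eq_single j (fun i _ hij => by rw [hnat i j hij, smul_zero]) ?_
  exact fun hj => absurd (Finset.mem_univ j) hj

lemma mul_eq_sum (hnat : NaturalBasis m bs) (x y : A) :
    m x y = ∑ j, bs.repr y j • bs.repr x j • m (bs j) (bs j) := by
  conv_lhs => rw [← bs.sum_repr y]
  simp only [map_sum, map_smul]
  exact Finset.sum_congr rfl fun j _ => by rw [mul_basis_right hnat]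

lemma sqA_eq_span_sq (hnat : NaturalBasis m bs) :
    sqA m = span F (Set.range fun j => m (bs j) (bs j)) := by
  refine le_antisymm (span_le.mpr ?_) (span_le.mpr ?_)
  · rintro _ ⟨x, -, y, -, rfl⟩
    rw [SetLike.mem_coe, mul_eq_sum hnat]
    exact sum_mem fun j _ => smul_mem _ _ (smul_mem _ _ (subset_span ⟨j, rfl⟩))
  · rintro _ ⟨j, rfl⟩
    exact mul_mem_sqA m _ _

lemma mem_annOver_iff (hcomm : ∀ x y, m x y = m y x) (hnat : NaturalBasis m bs)
    (N : Submodule F A) (x : A) :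
    x ∈ annOver m N ↔ ∀ j, bs.repr x j • m (bs j) (bs j) ∈ N := by
  refine ⟨fun hx j => mul_basis_right hnat x j ▸ (hx (bs j)).1, fun hx y => ?_⟩
  have hxy : m x y ∈ N := by
    rw [mul_eq_sum hnat]
    exact sum_mem fun j _ => N.smul_mem _ (hx j)
  exact ⟨hxy, hcomm y x ▸ hxy⟩

theorem finrank_annA_add_finrank_sqA_le [FiniteDimensional F A] (hnat : NaturalBasis m bs) :
    finrank F (annA m) + finrank F (sqA m) ≤ finrank F A := by
  set T := bs.constr F fun j => m (bs j) (bs j)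
  have hker : annA m ≤ LinearMap.ker T := by
    intro x hx
    rw [LinearMap.mem_ker, Basis.constr_apply_fintype]
    refine Finset.sum_eq_zero fun j _ => ?_
    rw [Basis.equivFun_apply, ← mul_basis_right hnat]
    exact (mem_bot F).mp (hx (bs j)).1
  have hrange : sqA m = LinearMap.range T := by
    rw [Basis.constr_range, sqA_eq_span_sq hnat]
  have := finrank_mono hker
  have := LinearMap.finrank_range_add_finrank_ker T
  rw [← hrange] at this
  omega

lemma exists_sq_mem_annSeries_succ_notMem (hcomm : ∀ x y, m x y = m y x)
    (hnat : NaturalBasis m bs) {a : ℕ} (h : annSeries m (a + 1) < annSeries m (a + 2)) :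
    ∃ j, m (bs j) (bs j) ∈ annSeries m (a + 1) ∧ m (bs j) (bs j) ∉ annSeries m a := by
  by_contra! hnone
  refine h.not_ge fun x hx => ?_
  rw [show a + 2 = a + 1 + 1 from rfl, annSeries, mem_annOver_iff hcomm hnat] at hx
  rw [annSeries, mem_annOver_iff hcomm hnat]
  intro j
  by_cases hxj : bs.repr x j = 0
  · simp [hxj]
  · exact smul_mem _ _ (hnone j ((smul_mem_iff _ hxj).mp (hx j)))

theorem finrank_annA_add_le_finrank_sqA [FiniteDimensional F A] (hcomm : ∀ x y, m x y = m y x)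
    (hnat : NaturalBasis m bs) {r : ℕ} (htop : annSeries m r = ⊤)
    (hmin : annSeries m (r - 1) ≠ ⊤) (hAnn : annA m ≤ sqA m) :
    finrank F (annA m) + (r - 2) ≤ finrank F (sqA m) := by
  have hchain : finrank F ↥(sqA m ⊓ annSeries m 1) + (r - 2) ≤
      finrank F ↥(sqA m ⊓ annSeries m (r - 2 + 1)) :=
    finrank_add_le_finrank_of_lt_succ (fun k => sqA m ⊓ annSeries m (k + 1)) fun k hk => by
      obtain ⟨j, hj, hj'⟩ := exists_sq_mem_annSeries_succ_notMem hcomm hnat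
        (annSeries_lt_succ m htop hmin (k := k + 2) (by omega))
      refine SetLike.lt_iff_le_and_exists.mpr
        ⟨inf_le_inf_left _ (annSeries_le_succ m _), _, mem_inf.mpr ⟨mul_mem_sqA m _ _, hj⟩, ?_⟩
      exact fun hmem => hj' hmem.2
  rw [annSeries_one, inf_eq_right.mpr hAnn] at hchain
  exact hchain.trans (finrank_mono inf_le_left)

lemma sqA_ne_bot (hcomm : ∀ x y, m x y = m y x) (hnat : NaturalBasis m bs)
    (h : annSeries m 1 < annSeries m 2) : sqA m ≠ ⊥ := by
  obtain ⟨j, -, hj⟩ := exists_sq_mem_annSeries_succ_notMem hcomm hnat h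
  intro hbot
  have hj0 := mul_mem_sqA m (bs j) (bs j)
  rw [hbot] at hj0
  exact hj hj0

end Evolution

/-- A nilpotent evolution algebra of dimension `n` and type `[n₁,…,n_r]` with
`r ≥ 3` and `2n₁ > n - r + 2` is decomposable. -/
theorem stmt15 {F E : Type*} [Field F] [AddCommGroup E] [Module F E]
    [FiniteDimensional F E] (m : Mul2 F E) (hev : IsEvolutionAlg m)
    (r : ℕ) (hr : 3 ≤ r)
    (htop : annSeries m r = ⊤) (hmin : annSeries m (r - 1) ≠ ⊤)
    (h : Module.finrank F E - r + 2 < 2 * Module.finrank F (annSeries m 1)) :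
    Decomposable m := by
  obtain ⟨hcomm, ι, _, bs, hnat⟩ := hev
  have hsq := sqA_ne_bot hcomm hnat (annSeries_lt_succ m htop hmin (by omega))
  refine decomposable_of_not_annA_le_sqA m (fun hAnn => ?_) hsq
  have hlower := finrank_annA_add_le_finrank_sqA hcomm hnat htop hmin hAnn
  have hupper := finrank_annA_add_finrank_sqA_le (m := m) hnat
  rw [annSeries_one] at h
  omega
end
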